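/- Fix t ∈ [0,T] and suppose Λ_t = Λ(t,·,·,·): ℝ^ℓ×ℝ^ℓ×P₂(ℝ^ℓ) → ℝ^m is Lipschitz continuous (Euclidean in the vector arguments, W₂ in the measure argument). Then the map φ_t: P₂(ℝ^ℓ×ℝ^ℓ) → P₂(ℝ^ℓ×ℝ^m) defined by φ_t(ξ) = ξ ∘ (id_ℓ, Λ_t(·,·,μ))^{-1}, where μ is the first marginal of ξ and id_ℓ the projection onto the first ℝ^ℓ coordinate, is Lipschitz continuous with respect to the 2-Wasserstein distance. -/

import Mathlib

open MeasureTheory ProbabilityTheory Filter Set Matrix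
open scoped ENNReal NNReal InnerProductSpace BigOperators Topology

noncomputable section

namespace MFLDP

/-- Euclidean state space `ℝ^n`. -/
abbrev Vec (n : ℕ) := EuclideanSpace ℝ (Fin n)

/-- Matrix-vector multiplication on Euclidean spaces. -/
def matVec {a b : ℕ} (M : Matrix (Fin a) (Fin b) ℝ) (v : Vec b) : Vec a :=
  (EuclideanSpace.equiv (Fin a) ℝ).symm (M.mulVec (EuclideanSpace.equiv (Fin b) ℝ v))

/-- The (real) second moment `∫ ‖v‖² dμ` of a measure. -/
def mom2 {E : Type*} [MeasurableSpace E] [NormedAddCommGroup E] (μ : Measure E) : ℝ :=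
  ∫ v, ‖v‖ ^ 2 ∂μ

/-- Membership in `P₂(E)`: probability measures with finite second moment. -/
def memP2 {E : Type*} [MeasurableSpace E] [NormedAddCommGroup E] (μ : Measure E) : Prop :=
  IsProbabilityMeasure μ ∧ (∫⁻ v, (‖v‖₊ : ℝ≥0∞) ^ 2 ∂μ) < ⊤

/-- `π` is a coupling of the measures `μ` and `ν`. -/
def IsCoupling {E F : Type*} [MeasurableSpace E] [MeasurableSpace F]
    (π : Measure (E × F)) (μ : Measure E) (ν : Measure F) : Prop :=
  π.map Prod.fst = μ ∧ π.map Prod.snd = ν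

/-- The second order Wasserstein distance, defined through couplings. -/
def W2 {E : Type*} [MeasurableSpace E] [PseudoMetricSpace E] (μ ν : Measure E) : ℝ :=
  Real.sqrt (sInf { r : ℝ | ∃ π : Measure (E × E),
    IsCoupling π μ ν ∧ r = ∫ p, dist p.1 p.2 ^ 2 ∂π })

/-- Empirical measure `L^N(z) = N⁻¹ ∑ δ_{z_i}` of a tuple `z`. -/
def emp {E : Type*} [MeasurableSpace E] {N : ℕ} (z : Fin N → E) : Measure E :=
  ((N : ℝ≥0∞)⁻¹) • ∑ i, Measure.dirac (z i)

lemma emp_isProbability {E : Type*} [MeasurableSpace E] {N : ℕ} (z : Fin (N + 1) → E) :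
    IsProbabilityMeasure (emp z) := by
  constructor
  simp only [emp, Measure.smul_apply, Measure.coe_finset_sum, Finset.sum_apply,
    measure_univ, smul_eq_mul]
  rw [Finset.sum_const, Finset.card_univ, Fintype.card_fin, nsmul_eq_mul, mul_one]
  exact ENNReal.inv_mul_cancel (by exact_mod_cast Nat.succ_ne_zero N) (by simp)

/-- Empirical probability measure; for `N = 0` it is a Dirac mass at a default point. -/
def empProb {E : Type*} [MeasurableSpace E] (e₀ : E) :
    ∀ {N : ℕ}, (Fin N → E) → ProbabilityMeasure E
  | 0, _ => ⟨Measure.dirac e₀, by infer_instance⟩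
  | (_ + 1), z => ⟨emp z, emp_isProbability z⟩

/-- A `d`-dimensional Brownian motion (with respect to a given measure `P`). -/
structure IsBrownianMotion {Ω : Type*} [MeasurableSpace Ω] (P : Measure Ω) {d : ℕ}
    (W : ℝ → Ω → Vec d) : Prop where
  init : ∀ᵐ ω ∂P, W 0 ω = 0
  cont : ∀ ω, Continuous fun t => W t ω
  meas : ∀ t, Measurable (W t)
  incr_law : ∀ s t : ℝ, 0 ≤ s → s ≤ t →
    P.map (fun ω => W t ω - W s ω)
      = (Measure.pi fun _ : Fin d => gaussianReal 0 (Real.toNNReal (t - s))).map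
          (MeasurableEquiv.toLp 2 (Fin d → ℝ))
  indep_incr : ∀ (n : ℕ) (τ : Fin (n + 1) → ℝ), Monotone τ → (∀ i, 0 ≤ τ i) →
    iIndepFun (m := fun _ : Fin n => (inferInstance : MeasurableSpace (Vec d)))
      (fun i ω => W (τ i.succ) ω - W (τ i.castSucc) ω) P

section LDP

variable {E : Type*} [MeasurableSpace E] [TopologicalSpace E] [OpensMeasurableSpace E]

/-- A good rate function: lower semicontinuous with (weakly) compact sublevel sets. -/
def GoodRateFn (I : ProbabilityMeasure E → ℝ≥0∞) : Prop :=
  LowerSemicontinuous I ∧ ∀ a : ℝ≥0, IsCompact { μ : ProbabilityMeasure E | I μ ≤ a }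

/-- The Laplace principle formulation of the large deviation principle for a sequence of random
probability measures `μN`, with rate function `I`. -/
def SatisfiesLDP {Ω : Type*} [MeasurableSpace Ω] (P : Measure Ω)
    (μN : (N : ℕ) → Ω → ProbabilityMeasure E) (I : ProbabilityMeasure E → ℝ≥0∞) : Prop :=
  GoodRateFn I ∧
    ∀ F : BoundedContinuousFunction (ProbabilityMeasure E) ℝ,
      Tendsto
        (fun N : ℕ =>
          ((- (1 / (N : ℝ)) * Real.log (∫ ω, Real.exp (-(N : ℝ) * F (μN N ω)) ∂P) : ℝ) : EReal))
        atTop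
        (𝓝 (⨅ μ : ProbabilityMeasure E, ((F μ : EReal) - ((I μ : ℝ≥0∞) : EReal))))

end LDP

section Path

variable {T : ℝ} {n : ℕ}

instance pathMeasurableSpace : MeasurableSpace C(Set.Icc (0:ℝ) T, Vec n) := borel _

instance pathBorelSpace : BorelSpace C(Set.Icc (0:ℝ) T, Vec n) := ⟨rfl⟩

/-- The path of a (surely) continuous process. -/
def pathOf {Ω : Type*} (X : ℝ → Ω → Vec n) (h : ∀ ω, Continuous fun t => X t ω) (ω : Ω) :
    C(Set.Icc (0:ℝ) T, Vec n) :=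
  ⟨fun s => X s ω, (h ω).comp continuous_subtype_val⟩

/-- Time-`t` marginal of a path-space measure. -/
def marginal (θ : Measure C(Set.Icc (0:ℝ) T, Vec n)) (t : Set.Icc (0:ℝ) T) : Measure (Vec n) :=
  θ.map fun γ => γ t

end Path

/-- The rate function `I(θ)` of the controlled McKean–Vlasov system with drift `D`:
`I(θ) = inf { E[½∫₀ᵀ |u_t|²dt] : u ∈ 𝒰, law(X^u) = θ }` where
`dX^u = (D(t,X^u,law(X^u)) + σ u_t) dt + σ dW_t`, `X^u_0 = x₀`  (with `inf ∅ = ∞`). -/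
def rateI (ℓ d : ℕ) (T : ℝ) (x₀ : Vec ℓ) (σ : Matrix (Fin ℓ) (Fin d) ℝ)
    (D : ℝ → Vec ℓ → Measure (Vec ℓ) → Vec ℓ)
    (θ : ProbabilityMeasure C(Set.Icc (0:ℝ) T, Vec ℓ)) : ℝ≥0∞ :=
  sInf { r : ℝ≥0∞ | ∃ (Ω' : Type) (m' : MeasurableSpace Ω') (P' : Measure Ω')
    (_hP' : IsProbabilityMeasure P') (ℱ' : Filtration ℝ m') (W' : ℝ → Ω' → Vec d)
    (u : ℝ → Ω' → Vec d) (X : ℝ → Ω' → Vec ℓ) (hX : ∀ ω, Continuous fun t => X t ω),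
    IsBrownianMotion P' W' ∧ Adapted ℱ' W' ∧ ProgMeasurable ℱ' u ∧
    (∫⁻ ω, ENNReal.ofReal (∫ t in (0:ℝ)..T, ‖u t ω‖ ^ 2) ∂P') < ⊤ ∧
    (∀ᵐ ω ∂P', ∀ t ∈ Set.Icc (0:ℝ) T,
      X t ω = x₀ + (∫ s in (0:ℝ)..t, (D s (X s ω) (P'.map (X s)) + matVec σ (u s ω)))
        + matVec σ (W' t ω)) ∧
    P'.map (pathOf X hX) = (θ : Measure C(Set.Icc (0:ℝ) T, Vec ℓ)) ∧
    r = ∫⁻ ω, ENNReal.ofReal (∫ t in (0:ℝ)..T, ‖u t ω‖ ^ 2 / 2) ∂P' }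

end MFLDP

namespace MFLDP

/-- Empirical measure of the paths of an `N`-tuple of (surely continuous) processes,
as a random probability measure on path space. -/
def empPaths {n : ℕ} {Ω : Type*} (T : ℝ) {N : ℕ} (X : Fin N → ℝ → Ω → Vec n)
    (h : ∀ i ω, Continuous fun t => X i t ω) (ω : Ω) :
    ProbabilityMeasure C(Set.Icc (0:ℝ) T, Vec n) :=
  empProb (ContinuousMap.const _ (0 : Vec n)) fun i => pathOf (X i) (h i) ω

end MFLDP

namespace MFLDP

variable {ℓ m : ℕ}

/-- `ξ = law(χ, V(t,χ,μ))` for `χ ~ μ`. -/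
def xiOf (V : ℝ → Vec ℓ → Measure (Vec ℓ) → Vec ℓ) (t : ℝ) (μ : Measure (Vec ℓ)) :
    Measure (Vec ℓ × Vec ℓ) :=
  μ.map fun z => (z, V t z μ)

/-- `∑_{j,k} Q_{jk} ∂²_{x_j x_k} φ(x)`, the trace term `tr(∂ₓₓφ Q)` (coordinatewise). -/
def hessTrace {n ℓ' : ℕ} (Q : Matrix (Fin n) (Fin n) ℝ) (φ : Vec n → Vec ℓ') (x : Vec n) :
    Vec ℓ' :=
  ∑ j, ∑ k, Q j k •
    fderiv ℝ (fun x' => fderiv ℝ φ x' (EuclideanSpace.single k 1)) x (EuclideanSpace.single j 1)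

/-- `∑_{j,k} Q_{jk} ∂_{y_k} M(y)_{i j}`: the mixed trace `tr(∂_y ∂_μ V (y) Q)`. -/
def mixTrace {ℓ' : ℕ} (Q : Matrix (Fin ℓ') (Fin ℓ') ℝ)
    (M : Vec ℓ' → Matrix (Fin ℓ') (Fin ℓ') ℝ) (y : Vec ℓ') : Vec ℓ' :=
  (EuclideanSpace.equiv (Fin ℓ') ℝ).symm fun i =>
    ∑ j, ∑ k, Q j k * fderiv ℝ (fun y' => M y' i j) y (EuclideanSpace.single k 1)

end MFLDP

namespace MFLDP

variable {Ω : Type*} [MeasurableSpace Ω]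

/-- The `S^∞`-norm of a real-valued process: essential supremum over `ω` of
`sup_{t ∈ [0,T]} |·|`. -/
def SInfty (P : Measure Ω) (T : ℝ) (g : ℝ → Ω → ℝ) : ℝ≥0∞ :=
  essSup (fun ω => ⨆ t : Set.Icc (0:ℝ) T, ENNReal.ofReal |g (t : ℝ) ω|) P

end MFLDP
namespace MFLDP


/-!
Push a coupling `π` of `ξ, ξ'` forward under the product of the two graph maps
`p ↦ (p.1, Λ p.1 p.2 μ)` and `p ↦ (p.1, Λ p.1 p.2 μ')`: it couples the two images. By the
Lipschitz bound the transported cost is pointwise at most a multiple of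
`|p - q|² + W₂(μ, μ')²`, and `W₂(μ, μ')² ≤ W₂(ξ, ξ')²` since projecting `π` onto first coordinates
couples the marginals. Integrating against `π` and taking the infimum over `π` gives the claim.
-/

open scoped Pointwise

section Coupling

variable {E F : Type*} [MeasurableSpace E] [MeasurableSpace F]

lemma IsCoupling.isProbabilityMeasure {μ ν : Measure E} {π : Measure (E × E)}
    (hπ : IsCoupling π μ ν) [IsProbabilityMeasure μ] : IsProbabilityMeasure π :=
  ⟨by rw [← Set.preimage_univ (f := Prod.fst), ← Measure.map_apply measurable_fst .univ, hπ.1,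
    measure_univ]⟩

lemma IsCoupling.map_prodMap {μ ν : Measure E} {π : Measure (E × E)}
    (hπ : IsCoupling π μ ν) {f g : E → F} (hf : Measurable f) (hg : Measurable g) :
    IsCoupling (π.map (Prod.map f g)) (μ.map f) (ν.map g) := by
  refine ⟨?_, ?_⟩
  · rw [Measure.map_map measurable_fst (hf.prodMap hg), ← hπ.1,
      Measure.map_map hf measurable_fst]
    rfl
  · rw [Measure.map_map measurable_snd (hf.prodMap hg), ← hπ.2,
      Measure.map_map hg measurable_snd]
    rfl

end Coupling

section Wasserstein

variable {E : Type*} [MeasurableSpace E] [PseudoMetricSpace E]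

def transportCosts (μ ν : Measure E) : Set ℝ :=
  { r : ℝ | ∃ π : Measure (E × E), IsCoupling π μ ν ∧ r = ∫ p, dist p.1 p.2 ^ 2 ∂π }

lemma transportCosts_nonneg {μ ν : Measure E} : ∀ r ∈ transportCosts μ ν, 0 ≤ r := by
  rintro _ ⟨π, -, rfl⟩
  exact integral_nonneg fun p => sq_nonneg _

lemma W2_nonneg (μ ν : Measure E) : 0 ≤ W2 μ ν := Real.sqrt_nonneg _

lemma sq_W2 (μ ν : Measure E) : W2 μ ν ^ 2 = sInf (transportCosts μ ν) :=
  Real.sq_sqrt (Real.sInf_nonneg transportCosts_nonneg)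

lemma sq_W2_le_integral {μ ν : Measure E} {π : Measure (E × E)} (hπ : IsCoupling π μ ν) :
    W2 μ ν ^ 2 ≤ ∫ p, dist p.1 p.2 ^ 2 ∂π := by
  rw [sq_W2]
  exact csInf_le ⟨0, transportCosts_nonneg⟩ ⟨π, hπ, rfl⟩

lemma le_mul_sq_W2_add_of_forall_isCoupling {μ ν : Measure E} [IsProbabilityMeasure μ]
    [IsProbabilityMeasure ν] {X a b : ℝ} (ha : 0 ≤ a)
    (h : ∀ π : Measure (E × E), IsCoupling π μ ν → X ≤ a * ∫ p, dist p.1 p.2 ^ 2 ∂π + b) :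
    X ≤ a * W2 μ ν ^ 2 + b := by
  have hne : (transportCosts μ ν).Nonempty := ⟨_, μ.prod ν, ⟨by simp, by simp⟩, rfl⟩
  suffices X - b ≤ sInf (a • transportCosts μ ν) by
    rwa [Real.sInf_smul_of_nonneg ha, ← sq_W2, smul_eq_mul, sub_le_iff_le_add] at this
  refine le_csInf hne.smul_set ?_
  rintro _ ⟨_, ⟨π, hπ, rfl⟩, rfl⟩
  simpa [sub_le_iff_le_add] using h π hπ

lemma W2_self [OpensMeasurableSpace E] [SecondCountableTopology E] (μ : Measure E) :
    W2 μ μ = 0 := by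
  have hdiag : Measurable fun x : E => (x, x) := measurable_id.prodMk measurable_id
  have hπ : IsCoupling (μ.map fun x => (x, x)) μ μ :=
    ⟨by rw [Measure.map_map measurable_fst hdiag]; exact Measure.map_id,
      by rw [Measure.map_map measurable_snd hdiag]; exact Measure.map_id⟩
  have h := sq_W2_le_integral hπ
  rw [integral_map hdiag.aemeasurable (by fun_prop)] at h
  simpa using h

end Wasserstein

section Normed

variable {E F : Type*} [NormedAddCommGroup E] [MeasurableSpace E] [OpensMeasurableSpace E]

lemma memP2.integrable_norm_sq {μ : Measure E} (hμ : memP2 μ) :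
    Integrable (fun v => ‖v‖ ^ 2) μ := by
  refine ⟨by fun_prop, ?_⟩
  simpa only [HasFiniteIntegral, enorm_pow, enorm_norm, ← enorm_eq_nnnorm] using hμ.2

lemma memP2.map_fst [NormedAddCommGroup F] [MeasurableSpace F] {ξ : Measure (E × F)}
    (hξ : memP2 ξ) : memP2 (ξ.map Prod.fst) := by
  have := hξ.1
  refine ⟨Measure.isProbabilityMeasure_map measurable_fst.aemeasurable, ?_⟩
  rw [lintegral_map (by fun_prop) measurable_fst]
  refine lt_of_le_of_lt (lintegral_mono fun p => ?_) hξ.2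
  gcongr
  exact_mod_cast norm_fst_le p

lemma IsCoupling.integrable_dist_sq [SecondCountableTopology E] {μ ν : Measure E}
    {π : Measure (E × E)} (hπ : IsCoupling π μ ν) (hμ : memP2 μ) (hν : memP2 ν) :
    Integrable (fun p : E × E => dist p.1 p.2 ^ 2) π := by
  have h₁ := hμ.integrable_norm_sq
  have h₂ := hν.integrable_norm_sq
  rw [← hπ.1, integrable_map_measure (by fun_prop) (by fun_prop)] at h₁
  rw [← hπ.2, integrable_map_measure (by fun_prop) (by fun_prop)] at h₂
  refine ((h₁.add h₂).const_mul 2).mono' (by fun_prop) (.of_forall fun p => ?_)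
  have h := dist_le_norm_add_norm p.1 p.2
  rw [Real.norm_eq_abs, abs_of_nonneg (by positivity)]
  simp only [Pi.add_apply, Function.comp_apply]
  nlinarith [sq_nonneg (‖p.1‖ - ‖p.2‖), dist_nonneg (x := p.1) (y := p.2)]

lemma sq_W2_map_le [SecondCountableTopology E] [PseudoMetricSpace F] [MeasurableSpace F]
    [OpensMeasurableSpace F] [SecondCountableTopology F] {μ ν : Measure E} (hμ : memP2 μ)
    (hν : memP2 ν)
    {f g : E → F} (hf : Measurable f) (hg : Measurable g) {a b : ℝ} (ha : 0 ≤ a)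
    (h : ∀ x y, dist (f x) (g y) ^ 2 ≤ a * dist x y ^ 2 + b) :
    W2 (μ.map f) (ν.map g) ^ 2 ≤ a * W2 μ ν ^ 2 + b := by
  have := hμ.1
  have := hν.1
  refine le_mul_sq_W2_add_of_forall_isCoupling ha fun π hπ => ?_
  have := hπ.isProbabilityMeasure
  have hcost := hπ.integrable_dist_sq hμ hν
  calc W2 (μ.map f) (ν.map g) ^ 2
      ≤ ∫ p, dist p.1 p.2 ^ 2 ∂(π.map (Prod.map f g)) :=
        sq_W2_le_integral (hπ.map_prodMap hf hg)
    _ = ∫ p, dist (f p.1) (g p.2) ^ 2 ∂π :=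
        integral_map (hf.prodMap hg).aemeasurable (by fun_prop)
    _ ≤ ∫ p, (a * dist p.1 p.2 ^ 2 + b) ∂π :=
        integral_mono_of_nonneg (.of_forall fun _ => sq_nonneg _)
          ((hcost.const_mul a).add (integrable_const b)) (.of_forall fun p => h p.1 p.2)
    _ = a * ∫ p, dist p.1 p.2 ^ 2 ∂π + b := by
        rw [integral_add (hcost.const_mul a) (integrable_const b), integral_const_mul]
        simp

end Normed

section GraphMap

variable {E F G : Type*} [PseudoMetricSpace E] [PseudoMetricSpace F] [PseudoMetricSpace G]

lemma continuous_of_dist_le_mul_add {f : E × F → G} {K : ℝ} (hK : 0 ≤ K)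
    (h : ∀ p q, dist (f p) (f q) ≤ K * (dist p.1 q.1 + dist p.2 q.2)) : Continuous f := by
  refine (LipschitzWith.of_dist_le_mul (K := (2 * K).toNNReal) fun p q => ?_).continuous
  have h₁ : dist p.1 q.1 ≤ dist p q := le_max_left _ _
  have h₂ : dist p.2 q.2 ≤ dist p q := le_max_right _ _
  calc dist (f p) (f q) ≤ K * (dist p.1 q.1 + dist p.2 q.2) := h p q
    _ ≤ K * (dist p q + dist p q) := by gcongr
    _ = (2 * K).toNNReal * dist p q := by rw [Real.coe_toNNReal _ (by positivity)]; ring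

lemma dist_prodMk_sq_le {f g : E × F → G} {K w : ℝ} (hK : 0 ≤ K) (hw : 0 ≤ w)
    (h : ∀ p q, dist (f p) (g q) ≤ K * (dist p.1 q.1 + dist p.2 q.2 + w)) (p q : E × F) :
    dist ((p.1, f p) : E × G) (q.1, g q) ^ 2
      ≤ 2 * (1 + 2 * K) ^ 2 * dist p q ^ 2 + 2 * K ^ 2 * w ^ 2 := by
  have h₁ : dist p.1 q.1 ≤ dist p q := le_max_left _ _
  have h₂ : dist p.2 q.2 ≤ dist p q := le_max_right _ _
  have hlin : dist ((p.1, f p) : E × G) (q.1, g q) ≤ (1 + 2 * K) * dist p q + K * w :=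
    max_le (by nlinarith [dist_nonneg (x := p) (y := q)]) ((h p q).trans (by
      nlinarith [mul_le_mul_of_nonneg_left (add_le_add h₁ h₂) hK, dist_nonneg (x := p) (y := q)]))
  calc dist ((p.1, f p) : E × G) (q.1, g q) ^ 2
      ≤ ((1 + 2 * K) * dist p q + K * w) ^ 2 := pow_le_pow_left₀ dist_nonneg hlin 2
    _ ≤ 2 * (1 + 2 * K) ^ 2 * dist p q ^ 2 + 2 * K ^ 2 * w ^ 2 := by
      nlinarith [sq_nonneg ((1 + 2 * K) * dist p q - K * w)]

end GraphMap

theorem phi_W2_lipschitz_general {ℓ m : ℕ}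
    (Λ : Vec ℓ → Vec ℓ → MeasureTheory.Measure (Vec ℓ) → Vec m) (LΛ : ℝ)
    (hΛ : ∀ (x x' y y' : Vec ℓ) (μ μ' : MeasureTheory.Measure (Vec ℓ)),
      memP2 μ → memP2 μ' →
      ‖Λ x y μ - Λ x' y' μ'‖ ≤ LΛ * (‖x - x'‖ + ‖y - y'‖ + W2 μ μ')) :
    ∃ C > (0:ℝ), ∀ ξ ξ' : MeasureTheory.Measure (Vec ℓ × Vec ℓ), memP2 ξ → memP2 ξ' →
      W2 (ξ.map fun p => (p.1, Λ p.1 p.2 (ξ.map Prod.fst)))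
          (ξ'.map fun p => (p.1, Λ p.1 p.2 (ξ'.map Prod.fst)))
        ≤ C * W2 ξ ξ' := by
  set K := max LΛ 0
  have hK : 0 ≤ K := le_max_right _ _
  have hΛK : ∀ (x x' y y' : Vec ℓ) (ν ν' : Measure (Vec ℓ)), memP2 ν → memP2 ν' →
      dist (Λ x y ν) (Λ x' y' ν') ≤ K * (dist x x' + dist y y' + W2 ν ν') := by
    intro x x' y y' ν ν' hν hν'
    have := W2_nonneg ν ν'
    simpa only [dist_eq_norm] using (hΛ x x' y y' ν ν' hν hν').trans
      (mul_le_mul_of_nonneg_right (le_max_left _ _) (by positivity))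
  have hgraph : ∀ ν, memP2 ν → Measurable fun p : Vec ℓ × Vec ℓ => (p.1, Λ p.1 p.2 ν) :=
    fun ν hν => measurable_fst.prodMk (continuous_of_dist_le_mul_add hK fun p q => by
      simpa [W2_self] using hΛK p.1 q.1 p.2 q.2 ν ν hν hν).measurable
  refine ⟨2 * (1 + 2 * K), by positivity, fun ξ ξ' hξ hξ' => ?_⟩
  have hμ := hξ.map_fst
  have hμ' := hξ'.map_fst
  have hmarg : W2 (ξ.map Prod.fst) (ξ'.map Prod.fst) ^ 2 ≤ W2 ξ ξ' ^ 2 := by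
    simpa using sq_W2_map_le hξ hξ' measurable_fst measurable_fst zero_le_one (b := 0)
      fun p q => by
        rw [one_mul, add_zero]
        exact pow_le_pow_left₀ dist_nonneg (le_max_left _ _) 2
  have himage := sq_W2_map_le hξ hξ' (hgraph _ hμ) (hgraph _ hμ') (by positivity)
    (dist_prodMk_sq_le hK (W2_nonneg _ _) fun p q => hΛK p.1 q.1 p.2 q.2 _ _ hμ hμ')
  have := W2_nonneg ξ ξ'
  rw [← pow_le_pow_iff_left₀ (W2_nonneg _ _) (by positivity) two_ne_zero]
  nlinarith [mul_le_mul_of_nonneg_left hmarg (sq_nonneg K)]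

/-- if `Λ_t` is Lipschitz continuous (Euclidean in the vector arguments, `W₂`
in the measure argument), then `φ_t : P₂(ℝ^ℓ×ℝ^ℓ) → P₂(ℝ^ℓ×ℝ^m)`,
`φ_t(ξ) = ξ ∘ (id, Λ_t(·,·,μ))⁻¹` with `μ` the first marginal of `ξ`, is Lipschitz continuous
with respect to the 2-Wasserstein distance. -/
theorem phi_W2_lipschitz {ℓ m : ℕ} (T t : ℝ) (ht : t ∈ Set.Icc (0:ℝ) T)
    (Λ : Vec ℓ → Vec ℓ → MeasureTheory.Measure (Vec ℓ) → Vec m) (LΛ : ℝ)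
    (hΛ : ∀ (x x' y y' : Vec ℓ) (μ μ' : MeasureTheory.Measure (Vec ℓ)),
      memP2 μ → memP2 μ' →
      ‖Λ x y μ - Λ x' y' μ'‖ ≤ LΛ * (‖x - x'‖ + ‖y - y'‖ + W2 μ μ')) :
    ∃ C > (0:ℝ), ∀ ξ ξ' : MeasureTheory.Measure (Vec ℓ × Vec ℓ), memP2 ξ → memP2 ξ' →
      W2 (ξ.map fun p => (p.1, Λ p.1 p.2 (ξ.map Prod.fst)))
          (ξ'.map fun p => (p.1, Λ p.1 p.2 (ξ'.map Prod.fst)))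
        ≤ C * W2 ξ ξ' :=
  phi_W2_lipschitz_general Λ LΛ hΛ

end MFLDP
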